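/- arXiv:2109.01816 — 2 statements merged into one kernel-verified Lean document; each statement's English description precedes it below -/
import Mathlib

section
/- Let V be a real vector space with finrank V = 3, Q a quadratic form on V, and A, B, C, X elements of the Clifford algebra Cl(Q). If A·X − X·B = C, then D·X = A·C − C·B̄, where B̄ := involute (reverse B) and D := A² − A·(B + B̄) + B·B̄. -/
/-!
Clifford conjugation `y ↦ star y = involute (reverse y)` fixes grades 0 and 3 and negates
grades 1 and 2. In dimension 3 this makes `y + star y` a combination of `1` and the pseudoscalar
`e₀ e₁ e₂` of an orthogonal basis, hence central. Applied to `B` and to the self-conjugate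
`B * star B`, this lets `B + star B` and `B * star B` be moved past `X`; expanding
`A * C - C * star B` with `C = A * X - X * B` then gives the identity.
-/

namespace CliffordAlgebra

variable {R M : Type*} [CommRing R] [AddCommGroup M] [Module R M] {Q : QuadraticForm R M}

theorem ι_mem_span_ι_basis {ι' : Type*} (b : Module.Basis ι' R M) (v : M) :
    ι Q v ∈ Submodule.span R (Set.range fun i => ι Q (b i)) := by
  rw [Set.range_comp' (ι Q) b, Submodule.span_image]
  exact Submodule.mem_map_of_mem (b.mem_span v)

theorem mem_center_of_forall_commute_ι_basis {ι' : Type*} (b : Module.Basis ι' R M)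
    {z : CliffordAlgebra Q} (h : ∀ i, Commute (ι Q (b i)) z) :
    z ∈ Subalgebra.center R (CliffordAlgebra Q) := by
  have hspan : Submodule.span R (Set.range fun i => ι Q (b i)) ≤
      Subalgebra.toSubmodule (Subalgebra.centralizer R {z}) := by
    rw [Submodule.span_le]
    rintro _ ⟨i, rfl⟩
    exact (Subalgebra.mem_centralizer_iff R).mpr fun _ hg => hg ▸ (h i).symm.eq
  have hadjoin : Algebra.adjoin R (Set.range (ι Q)) ≤ Subalgebra.centralizer R {z} :=
    Algebra.adjoin_le fun _ ⟨v, hv⟩ => hv ▸ hspan (ι_mem_span_ι_basis b v)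
  rw [adjoin_range_ι] at hadjoin
  exact Subalgebra.mem_center_iff.mpr fun x =>
    ((Subalgebra.mem_centralizer_iff R).mp (hadjoin Algebra.mem_top) z rfl).symm

theorem ι_mul_ι_mul_self (a : M) (x : CliffordAlgebra Q) : ι Q a * (ι Q a * x) = Q a • x := by
  rw [← mul_assoc, ι_sq_scalar, Algebra.smul_def]

theorem eq_top_of_one_mem_of_ι_basis_mul_mem {ι' : Type*} (b : Module.Basis ι' R M)
    {S : Submodule R (CliffordAlgebra Q)} (h1 : 1 ∈ S)
    (h : ∀ i, ∀ s ∈ S, ι Q (b i) * s ∈ S) : S = ⊤ := by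
  have hι : ∀ v, ∀ s ∈ S, ι Q v * s ∈ S := fun v s hs => by
    have hv := ι_mem_span_ι_basis (Q := Q) b v
    generalize ι Q v = x at hv
    induction hv using Submodule.span_induction with
    | mem _ hx => obtain ⟨i, rfl⟩ := hx; exact h i s hs
    | zero => simp
    | add x y _ _ hx hy => rw [add_mul]; exact S.add_mem hx hy
    | smul r x _ hx => rw [smul_mul_assoc]; exact S.smul_mem r hx
  have hmul : ∀ z, ∀ s ∈ S, z * s ∈ S := fun z => by
    induction z using CliffordAlgebra.induction with
    | algebraMap r => intro s hs; rw [← Algebra.smul_def]; exact S.smul_mem r hs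
    | ι v => exact hι v
    | mul a c ha hc => intro s hs; rw [mul_assoc]; exact ha _ (hc s hs)
    | add a c ha hc => intro s hs; rw [add_mul]; exact S.add_mem (ha s hs) (hc s hs)
  exact eq_top_iff.mpr fun z _ => mul_one z ▸ hmul z 1 h1

section OrthogonalBasis

def basisMonomials (b : Module.Basis (Fin 3) R M) : Set (CliffordAlgebra Q) :=
  {1, ι Q (b 0), ι Q (b 1), ι Q (b 2), ι Q (b 0) * ι Q (b 1), ι Q (b 0) * ι Q (b 2),
    ι Q (b 1) * ι Q (b 2), ι Q (b 0) * ι Q (b 1) * ι Q (b 2)}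

variable {b : Module.Basis (Fin 3) R M} (hb : Pairwise fun i j => Q.IsOrtho (b i) (b j))
include hb

/-- Oriented so that `simp` sorts products of basis vectors by increasing index. -/
theorem ι_basis_anticomm :
    ι Q (b 1) * ι Q (b 0) = -(ι Q (b 0) * ι Q (b 1)) ∧
      ι Q (b 2) * ι Q (b 0) = -(ι Q (b 0) * ι Q (b 2)) ∧
      ι Q (b 2) * ι Q (b 1) = -(ι Q (b 1) * ι Q (b 2)) ∧
      (∀ x, ι Q (b 1) * (ι Q (b 0) * x) = -(ι Q (b 0) * (ι Q (b 1) * x))) ∧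
      (∀ x, ι Q (b 2) * (ι Q (b 0) * x) = -(ι Q (b 0) * (ι Q (b 2) * x))) ∧
      (∀ x, ι Q (b 2) * (ι Q (b 1) * x) = -(ι Q (b 1) * (ι Q (b 2) * x))) :=
  ⟨ι_mul_ι_comm_of_isOrtho (hb (by decide)), ι_mul_ι_comm_of_isOrtho (hb (by decide)),
    ι_mul_ι_comm_of_isOrtho (hb (by decide)),
    fun x => ι_mul_ι_mul_of_isOrtho x (hb (by decide)),
    fun x => ι_mul_ι_mul_of_isOrtho x (hb (by decide)),
    fun x => ι_mul_ι_mul_of_isOrtho x (hb (by decide))⟩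

theorem span_basisMonomials : Submodule.span R (basisMonomials (Q := Q) b) = ⊤ := by
  set S := Submodule.span R (basisMonomials (Q := Q) b)
  refine eq_top_of_one_mem_of_ι_basis_mul_mem b (Submodule.subset_span (by simp [basisMonomials]))
    fun i s hs => ?_
  have hmem : ∀ m ∈ basisMonomials (Q := Q) b, m ∈ S := fun m hm => Submodule.subset_span hm
  simp only [basisMonomials, Set.mem_insert_iff, Set.mem_singleton_iff, forall_eq_or_imp,
    forall_eq, mul_assoc] at hmem
  obtain ⟨h1, he0, he1, he2, he01, he02, he12, he012⟩ := hmem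
  induction hs using Submodule.span_induction with
  | mem m hm =>
    simp only [basisMonomials, Set.mem_insert_iff, Set.mem_singleton_iff] at hm
    fin_cases i <;> rcases hm with rfl | rfl | rfl | rfl | rfl | rfl | rfl | rfl <;>
      simp only [Fin.zero_eta, Fin.mk_one, Fin.reduceFinMk, mul_one, mul_assoc, mul_neg,
        mul_smul_comm, ι_basis_anticomm hb, ι_sq_scalar, ι_mul_ι_mul_self,
        Algebra.algebraMap_eq_smul_one] <;>
      apply_rules [Submodule.neg_mem, Submodule.smul_mem]
  | zero => simp
  | add x y _ _ hx hy => rw [mul_add]; exact S.add_mem hx hy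
  | smul r x _ hx => rw [mul_smul_comm]; exact S.smul_mem r hx

theorem ι_mul_ι_mul_ι_mem_center :
    ι Q (b 0) * ι Q (b 1) * ι Q (b 2) ∈ Subalgebra.center R (CliffordAlgebra Q) := by
  refine mem_center_of_forall_commute_ι_basis b fun i => ?_
  fin_cases i <;>
    simp [Commute, SemiconjBy, mul_assoc, ι_basis_anticomm hb]

theorem add_star_mem_span_one_ι_mul_ι_mul_ι (y : CliffordAlgebra Q) :
    y + star y ∈ Submodule.span R {1, ι Q (b 0) * ι Q (b 1) * ι Q (b 2)} := by
  have hy : y ∈ Submodule.span R (basisMonomials (Q := Q) b) := by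
    rw [span_basisMonomials hb]; trivial
  set T := Submodule.span R {1, ι Q (b 0) * ι Q (b 1) * ι Q (b 2)}
  have h1 : 1 ∈ T := Submodule.subset_span (by simp)
  have hω : ι Q (b 0) * (ι Q (b 1) * ι Q (b 2)) ∈ T :=
    Submodule.subset_span (by simp [mul_assoc])
  induction hy using Submodule.span_induction with
  | mem m hm =>
    simp only [basisMonomials, Set.mem_insert_iff, Set.mem_singleton_iff] at hm
    rcases hm with rfl | rfl | rfl | rfl | rfl | rfl | rfl | rfl <;>
      simp only [star_one, star_mul, star_ι, mul_neg, neg_mul, neg_neg, mul_assoc,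
        ι_basis_anticomm hb, add_neg_cancel] <;>
      first | exact T.zero_mem | exact T.add_mem h1 h1 | exact T.add_mem hω hω
  | zero => simp
  | add x y _ _ hx hy =>
    rw [star_add, add_add_add_comm]; exact add_mem hx hy
  | smul r x _ hx => rw [star_smul, ← smul_add]; exact Submodule.smul_mem _ r hx

theorem add_star_mem_center (y : CliffordAlgebra Q) :
    y + star y ∈ Subalgebra.center R (CliffordAlgebra Q) := by
  have hle : Submodule.span R {1, ι Q (b 0) * ι Q (b 1) * ι Q (b 2)} ≤
      Subalgebra.toSubmodule (Subalgebra.center R (CliffordAlgebra Q)) := by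
    rw [Submodule.span_le]
    rintro _ (rfl | rfl)
    exacts [Subalgebra.one_mem _, ι_mul_ι_mul_ι_mem_center hb]
  exact hle (add_star_mem_span_one_ι_mul_ι_mul_ι hb y)

end OrthogonalBasis

section FiniteDimensional

variable {K V : Type*} [Field K] [Invertible (2 : K)] [AddCommGroup V] [Module K V]
  {Q : QuadraticForm K V}

theorem exists_basis_fin_three_pairwise_isOrtho (hV : Module.finrank K V = 3) :
    ∃ b : Module.Basis (Fin 3) K V, Pairwise fun i j => Q.IsOrtho (b i) (b j) := by
  have : FiniteDimensional K V := .of_finrank_eq_succ hV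
  obtain ⟨v, hv⟩ :=
    LinearMap.BilinForm.exists_orthogonal_basis (QuadraticForm.associated_isSymm K Q)
  refine ⟨v.reindex (finCongr hV), fun i j hij => ?_⟩
  simp only [Module.Basis.reindex_apply]
  exact QuadraticMap.associated_isOrtho.mp (hv ((finCongr hV).symm.injective.ne hij))

theorem add_star_mem_center_of_finrank_eq_three (hV : Module.finrank K V = 3)
    (y : CliffordAlgebra Q) : y + star y ∈ Subalgebra.center K (CliffordAlgebra Q) :=
  let ⟨_, hb⟩ := exists_basis_fin_three_pairwise_isOrtho hV
  add_star_mem_center hb y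

theorem mul_star_mem_center_of_finrank_eq_three (hV : Module.finrank K V = 3)
    (y : CliffordAlgebra Q) : y * star y ∈ Subalgebra.center K (CliffordAlgebra Q) := by
  have h := add_star_mem_center_of_finrank_eq_three hV (y * star y)
  rw [star_mul, star_star, ← two_smul K] at h
  simpa only [smul_smul, invOf_mul_self, one_smul] using Subalgebra.smul_mem _ h (⅟2 : K)

end FiniteDimensional

end CliffordAlgebra

open CliffordAlgebra

theorem stmt_16 (V : Type*) [AddCommGroup V] [Module ℝ V]
    (hV : Module.finrank ℝ V = 3) (Q : QuadraticForm ℝ V)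
    (A B C X : CliffordAlgebra Q)
    (h : A * X - X * B = C) :
    (A ^ 2 - A * (B + involute (reverse B)) + B * involute (reverse B)) * X =
      A * C - C * involute (reverse B) := by
  subst h
  simp only [← star_def']
  have hsum := Subalgebra.mem_center_iff.mp (add_star_mem_center_of_finrank_eq_three hV B) X
  have hprod := Subalgebra.mem_center_iff.mp (mul_star_mem_center_of_finrank_eq_three hV B) X
  calc (A ^ 2 - A * (B + star B) + B * star B) * X
      = A * (A * X) - A * ((B + star B) * X) + B * star B * X := by noncomm_ring
    _ = A * (A * X) - A * (X * (B + star B)) + X * (B * star B) := by rw [← hsum, ← hprod]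
    _ = A * (A * X - X * B) - (A * X - X * B) * star B := by noncomm_ring
end

section
/- Let V be a real vector space with finrank V = 3, Q a quadratic form on V, and A, B, C elements of the Clifford algebra Cl(Q). Set B̄ := involute (reverse B) and D := A² − A·(B + B̄) + B·B̄. If D·(involute D)·(reverse D)·(involute (reverse D)) = algebraMap q for some real number q ≠ 0, then X := q⁻¹ • ((involute D)·(reverse D)·(involute (reverse D))·(A·C − C·B̄)) is the unique element of Cl(Q) satisfying A·X − X·B = C. -/
/-!
Write `x̄ = involute (reverse x)` for Clifford conjugation, which is Mathlib's `star` on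
`CliffordAlgebra`. In dimension 3, take an orthogonal basis `e₀, e₁, e₂`; the algebra is spanned
by the eight monomials in the `eᵢ`, and for a monomial `m` the sum `m + m̄` vanishes except in
degrees 0 and 3, where `m` is central. Hence `x + x̄` is central for every `x`, and so is every
self-conjugate element, such as `B + B̄`, `B B̄` and `x x̄`.

With `B + B̄` and `B B̄` central, composing `X ↦ A X - X B` with `Y ↦ A Y - Y B̄` (in either
order) is left multiplication by `D = A² - A (B + B̄) + B B̄`. The adjugate
`(involute D) (reverse D) D̄` commutes with `A`, and multiplying it by `D` gives the determinant
`q`. Multiplying by the adjugate and dividing by `q` therefore inverts the Sylvester operator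
`X ↦ A X - X B`.
-/

open CliffordAlgebra Pointwise

section Sylvester

variable {K R : Type*} [Field K] [Ring R] [Algebra K R]

theorem sylvester_comp_eq_mul (A B B' X : R) (hsum : Commute (B + B') X)
    (hprod : Commute (B * B') X) :
    A * (A * X - X * B) - (A * X - X * B) * B' = (A ^ 2 - A * (B + B') + B * B') * X := by
  rw [add_mul, sub_mul (A ^ 2), mul_assoc A (B + B'), hsum.eq, hprod.eq]
  noncomm_ring

theorem sylvester_explicit_solution {A B B' adj C : R} {q : K} (hq : q ≠ 0)
    (hsum : ∀ w, Commute (B + B') w) (hprod : ∀ w, Commute (B * B') w) (hadj : Commute A adj)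
    (hdet : adj * (A ^ 2 - A * (B + B') + B * B') = algebraMap K R q) :
    A * (q⁻¹ • (adj * (A * C - C * B'))) - q⁻¹ • (adj * (A * C - C * B')) * B = C ∧
      ∀ X, A * X - X * B = C → X = q⁻¹ • (adj * (A * C - C * B')) := by
  set D := A ^ 2 - A * (B + B') + B * B'
  have hswap : B' * B = B * B' := by
    simpa [mul_add, add_mul] using (hsum B).eq
  have hLM : ∀ Y, A * (A * Y - Y * B') - (A * Y - Y * B') * B = D * Y := fun Y => by
    simpa only [add_comm B', hswap] using
      sylvester_comp_eq_mul A B' B Y (add_comm B B' ▸ hsum Y) (hswap ▸ hprod Y)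
  have hcancel : ∀ Y, q⁻¹ • (adj * (D * Y)) = Y := fun Y => by
    rw [← mul_assoc, hdet, ← Algebra.smul_def, smul_smul, inv_mul_cancel₀ hq, one_smul]
  constructor
  · rw [mul_smul_comm, smul_mul_assoc, ← smul_sub, ← mul_assoc, hadj.eq, mul_assoc, mul_assoc,
      ← mul_sub, hLM, hcancel]
  · rintro X rfl
    rw [sylvester_comp_eq_mul A B B' X (hsum X) (hprod X), hcancel]

end Sylvester

namespace CliffordAlgebra

section

variable {R M : Type*} [CommRing R] [AddCommGroup M] [Module R M] {Q : QuadraticForm R M}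

def adjugate (D : CliffordAlgebra Q) : CliffordAlgebra Q :=
  involute D * reverse D * star D

theorem span_singleton_ι_mul_le (a : M) :
    (R ∙ ι Q a) * Submodule.span R {1, ι Q a} ≤ Submodule.span R {1, ι Q a} := by
  rw [Submodule.span_mul_span, Submodule.span_le, Set.mul_subset_iff]
  rintro _ rfl _ (rfl | rfl)
  · exact Submodule.subset_span (by simp)
  · rw [ι_sq_scalar, Algebra.algebraMap_eq_smul_one]
    exact Submodule.smul_mem _ _ (Submodule.subset_span (by simp))

theorem span_singleton_ι_mul_le_of_isOrtho {a b : M} (h : Q.IsOrtho a b) :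
    (R ∙ ι Q a) * Submodule.span R {1, ι Q b} ≤ Submodule.span R {1, ι Q b} * (R ∙ ι Q a) := by
  rw [Submodule.span_mul_span, Submodule.span_le, Set.mul_subset_iff]
  rintro _ rfl _ (rfl | rfl)
  · simpa using Submodule.mul_mem_mul (Submodule.subset_span (Set.mem_insert 1 _))
      (Submodule.mem_span_singleton_self (ι Q a))
  · rw [ι_mul_ι_comm_of_isOrtho h, ← neg_mul]
    exact Submodule.mul_mem_mul (neg_mem (Submodule.subset_span (Set.mem_insert_of_mem _ rfl)))
      (Submodule.mem_span_singleton_self _)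

theorem eq_top_of_one_le_of_range_ι_mul_le {W : Submodule R (CliffordAlgebra Q)} (h1 : 1 ≤ W)
    (hW : LinearMap.range (ι Q) * W ≤ W) : W = ⊤ := by
  rw [eq_top_iff, ← iSup_ι_range_eq_top]
  refine iSup_le fun n => ?_
  induction n with
  | zero => simpa using h1
  | succ n ih => exact pow_succ' (LinearMap.range (ι Q)) n ▸ (mul_le_mul_right ih _).trans hW

theorem range_ι_eq_iSup_of_span_eq_top {ι' : Type*} {v : ι' → M}
    (hspan : Submodule.span R (Set.range v) = ⊤) :
    LinearMap.range (ι Q) = ⨆ i, R ∙ ι Q (v i) := by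
  rw [LinearMap.range_eq_map, ← hspan, Submodule.map_span, ← Set.range_comp,
    Submodule.span_range_eq_iSup]
  rfl

theorem span_mul_span_mul_span_eq_top {v : Fin 3 → M} (hspan : Submodule.span R (Set.range v) = ⊤)
    (hv : Pairwise fun i j => Q.IsOrtho (v i) (v j)) :
    Submodule.span R {1, ι Q (v 0)} * Submodule.span R {1, ι Q (v 1)} *
      Submodule.span R {1, ι Q (v 2)} = ⊤ := by
  set U : Fin 3 → Submodule R (CliffordAlgebra Q) := fun i => Submodule.span R {1, ι Q (v i)}
  set E : Fin 3 → Submodule R (CliffordAlgebra Q) := fun i => R ∙ ι Q (v i)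
  have h10 : (1 : Fin 3) ≠ 0 := by decide
  have h20 : (2 : Fin 3) ≠ 0 := by decide
  have h21 : (2 : Fin 3) ≠ 1 := by decide
  -- `E i` passes through `U j` for `j ≠ i` by anticommutation and is absorbed by `U i`.
  have hE : ∀ i, E i * (U 0 * U 1 * U 2) ≤ U 0 * U 1 * U 2 := by
    intro i
    fin_cases i
    · calc E 0 * (U 0 * U 1 * U 2) = E 0 * U 0 * U 1 * U 2 := by simp only [mul_assoc]
        _ ≤ U 0 * U 1 * U 2 :=
          mul_le_mul_left (mul_le_mul_left (span_singleton_ι_mul_le _) _) _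
    · calc E 1 * (U 0 * U 1 * U 2) = E 1 * U 0 * U 1 * U 2 := by simp only [mul_assoc]
        _ ≤ U 0 * E 1 * U 1 * U 2 :=
          mul_le_mul_left (mul_le_mul_left (span_singleton_ι_mul_le_of_isOrtho (hv h10)) _) _
        _ = U 0 * (E 1 * U 1) * U 2 := by simp only [mul_assoc]
        _ ≤ U 0 * U 1 * U 2 :=
          mul_le_mul_left (mul_le_mul_right (span_singleton_ι_mul_le _) _) _
    · calc E 2 * (U 0 * U 1 * U 2) = E 2 * U 0 * U 1 * U 2 := by simp only [mul_assoc]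
        _ ≤ U 0 * E 2 * U 1 * U 2 :=
          mul_le_mul_left (mul_le_mul_left (span_singleton_ι_mul_le_of_isOrtho (hv h20)) _) _
        _ = U 0 * (E 2 * U 1) * U 2 := by simp only [mul_assoc]
        _ ≤ U 0 * (U 1 * E 2) * U 2 :=
          mul_le_mul_left (mul_le_mul_right (span_singleton_ι_mul_le_of_isOrtho (hv h21)) _) _
        _ = U 0 * U 1 * (E 2 * U 2) := by simp only [mul_assoc]
        _ ≤ U 0 * U 1 * U 2 := mul_le_mul_right (span_singleton_ι_mul_le _) _
  have h1 : (1 : Submodule R (CliffordAlgebra Q)) ≤ U 0 * U 1 * U 2 := by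
    rw [Submodule.one_le]
    have hU : ∀ i, (1 : CliffordAlgebra Q) ∈ U i := fun i =>
      Submodule.subset_span (Set.mem_insert 1 _)
    simpa using Submodule.mul_mem_mul (Submodule.mul_mem_mul (hU 0) (hU 1)) (hU 2)
  refine eq_top_of_one_le_of_range_ι_mul_le h1 ?_
  rw [range_ι_eq_iSup_of_span_eq_top hspan, Submodule.iSup_mul]
  exact iSup_le hE

theorem commute_ι_add_star_of_mem_mul {v : Fin 3 → M}
    (hv : Pairwise fun i j => Q.IsOrtho (v i) (v j)) (i : Fin 3) {x : CliffordAlgebra Q}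
    (hx : x ∈ ({1, ι Q (v 0)} : Set (CliffordAlgebra Q)) * {1, ι Q (v 1)} * {1, ι Q (v 2)}) :
    Commute (ι Q (v i)) (x + star x) := by
  have h10 := ι_mul_ι_comm_of_isOrtho (hv (by decide : (1 : Fin 3) ≠ 0))
  have h20 := ι_mul_ι_comm_of_isOrtho (hv (by decide : (2 : Fin 3) ≠ 0))
  have h21 := ι_mul_ι_comm_of_isOrtho (hv (by decide : (2 : Fin 3) ≠ 1))
  have h10' := fun y => ι_mul_ι_mul_of_isOrtho y (hv (by decide : (1 : Fin 3) ≠ 0))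
  have h20' := fun y => ι_mul_ι_mul_of_isOrtho y (hv (by decide : (2 : Fin 3) ≠ 0))
  have h21' := fun y => ι_mul_ι_mul_of_isOrtho y (hv (by decide : (2 : Fin 3) ≠ 1))
  have hsq : ∀ j y, ι Q (v j) * (ι Q (v j) * y) = algebraMap R _ (Q (v j)) * y := fun j y => by
    rw [← mul_assoc, ι_sq_scalar]
  obtain ⟨_, ⟨a, ha, b, hb, rfl⟩, c, hc, rfl⟩ := hx
  simp only [Set.mem_insert_iff, Set.mem_singleton_iff] at ha hb hc
  rw [commute_iff_eq]
  -- `simp` puts both sides in normal order: increasing indices, squares replaced by scalars.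
  fin_cases i <;> rcases ha with rfl | rfl <;> rcases hb with rfl | rfl <;>
    rcases hc with rfl | rfl <;>
    simp [mul_assoc, h10, h20, h21, h10', h20', h21', ι_sq_scalar, hsq, Algebra.left_comm,
      mul_add, add_mul]

theorem commute_of_forall_commute_ι {ι' : Type*} {v : ι' → M}
    (hspan : Submodule.span R (Set.range v) = ⊤) {y : CliffordAlgebra Q}
    (h : ∀ i, Commute y (ι Q (v i))) (w : CliffordAlgebra Q) : Commute y w := by
  have hι : LinearMap.mulLeft R y ∘ₗ ι Q = LinearMap.mulRight R y ∘ₗ ι Q :=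
    LinearMap.ext_on_range hspan fun i => (h i).eq
  induction w using CliffordAlgebra.induction with
  | algebraMap r => exact Algebra.commute_algebraMap_right r y
  | ι m => exact LinearMap.congr_fun hι m
  | mul a b ha hb => exact ha.mul_right hb
  | add a b ha hb => exact ha.add_right hb

theorem commute_add_star_of_orthogonal {v : Fin 3 → M} (hspan : Submodule.span R (Set.range v) = ⊤)
    (hv : Pairwise fun i j => Q.IsOrtho (v i) (v j)) (x w : CliffordAlgebra Q) :
    Commute (x + star x) w := by
  refine commute_of_forall_commute_ι hspan (fun i => ?_) w
  have hx : x ∈ Submodule.span R (({1, ι Q (v 0)} : Set (CliffordAlgebra Q)) * {1, ι Q (v 1)} *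
      {1, ι Q (v 2)}) := by
    rw [← Submodule.span_mul_span, ← Submodule.span_mul_span,
      span_mul_span_mul_span_eq_top hspan hv]
    trivial
  refine Commute.symm ?_
  induction hx using Submodule.span_induction with
  | mem x hx => exact commute_ι_add_star_of_mem_mul hv i hx
  | zero => simp
  | add a b _ _ ha hb => simpa [add_add_add_comm] using ha.add_right hb
  | smul r a _ ha => simpa [smul_add] using ha.smul_right r

end

section

variable {K V : Type*} [Field K] [Invertible (2 : K)] [AddCommGroup V] [Module K V]
  {Q : QuadraticForm K V}

theorem commute_add_star (hV : Module.finrank K V = 3) (x w : CliffordAlgebra Q) :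
    Commute (x + star x) w := by
  have : FiniteDimensional K V := Module.finite_of_finrank_eq_succ hV
  obtain ⟨v, hv⟩ :=
    LinearMap.BilinForm.exists_orthogonal_basis (QuadraticForm.associated_isSymm K Q)
  refine commute_add_star_of_orthogonal (v := v.reindex (finCongr hV)) (Module.Basis.span_eq _)
    (fun i j hij => ?_) x w
  simp only [Module.Basis.reindex_apply]
  exact QuadraticMap.associated_isOrtho.mp (hv fun h => hij ((finCongr hV).symm.injective h))

theorem commute_of_isSelfAdjoint (hV : Module.finrank K V = 3)
    {y : CliffordAlgebra Q} (hy : IsSelfAdjoint y) (w : CliffordAlgebra Q) : Commute y w := by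
  have h := (commute_add_star hV y w).smul_left (⅟2 : K)
  rwa [hy.star_eq, ← two_smul K, smul_smul, invOf_mul_self, one_smul] at h

theorem commute_star_self (hV : Module.finrank K V = 3) (x : CliffordAlgebra Q) :
    Commute x (star x) := by
  simpa using (commute_add_star hV x x).symm.sub_right (Commute.refl x)

theorem commute_involute_mul_reverse (hV : Module.finrank K V = 3) (x w : CliffordAlgebra Q) :
    Commute (involute x * reverse x) w := by
  have h := (commute_of_isSelfAdjoint hV (.mul_star_self x) (involute w)).map
    (involute : CliffordAlgebra Q →ₐ[K] _)
  rwa [involute_involute, map_mul, star_def', involute_involute] at h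

theorem adjugate_mul_self (hV : Module.finrank K V = 3) (D : CliffordAlgebra Q) :
    adjugate D * D = D * involute D * reverse D * star D := by
  rw [adjugate, mul_assoc _ (star D), ← (commute_star_self hV D).eq, ← mul_assoc,
    (commute_involute_mul_reverse hV D D).eq, mul_assoc D, mul_assoc D, ← mul_assoc D]

theorem commute_adjugate (hV : Module.finrank K V = 3) (A B : CliffordAlgebra Q) :
    Commute A (adjugate (A ^ 2 - A * (B + star B) + B * star B)) := by
  refine (commute_involute_mul_reverse hV _ A).symm.mul_right ?_
  have hsum := commute_of_isSelfAdjoint hV (.add_star_self B)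
  have hprod := commute_of_isSelfAdjoint hV (.mul_star_self B)
  have hA := commute_star_self hV A
  rw [star_add, star_sub, star_mul, star_pow, (IsSelfAdjoint.add_star_self B).star_eq,
    (IsSelfAdjoint.mul_star_self B).star_eq]
  exact ((hA.pow_right 2).sub_right ((hsum A).symm.mul_right hA)).add_right (hprod A).symm

end

end CliffordAlgebra

theorem stmt_17 (V : Type*) [AddCommGroup V] [Module ℝ V]
    (hV : Module.finrank ℝ V = 3) (Q : QuadraticForm ℝ V)
    (A B C : CliffordAlgebra Q) (D : CliffordAlgebra Q)
    (hD : D = A ^ 2 - A * (B + involute (reverse B)) + B * involute (reverse B))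
    (q : ℝ) (hq : q ≠ 0)
    (hdet : D * involute D * reverse D * involute (reverse D) =
      algebraMap ℝ (CliffordAlgebra Q) q) :
    A * (q⁻¹ • (involute D * reverse D * involute (reverse D) *
          (A * C - C * involute (reverse B)))) -
        (q⁻¹ • (involute D * reverse D * involute (reverse D) *
          (A * C - C * involute (reverse B)))) * B = C ∧
      ∀ X : CliffordAlgebra Q, A * X - X * B = C →
        X = q⁻¹ • (involute D * reverse D * involute (reverse D) *
          (A * C - C * involute (reverse B))) := by
  simp only [← star_def'] at hD hdet ⊢
  subst hD
  exact sylvester_explicit_solution hq (commute_add_star hV B)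
    (commute_of_isSelfAdjoint hV (.mul_star_self B)) (commute_adjugate hV A B)
    ((adjugate_mul_self hV _).trans hdet)
end
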